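/- arXiv:1906.09680 — 2 statements merged into one kernel-verified Lean document; each statement's English description precedes it below -/
import Mathlib

section
/- Let q ≥ 1 and n ≥ 2q + 1 be integers and set τ = (q − 1)/q. Let d₁, …, dₙ be real numbers such that 0 ≤ dᵢ ≤ n − i + 1 for every i with 1 ≤ i ≤ n, and additionally dᵢ ≤ (n − i + 1)τ for every i with 1 ≤ i ≤ n − q − 1. Then Σ_{i=1}^{n} ((n − i + 1) − dᵢ)² > n(n + 1)(n + 2)/(6q²) − q/6 − 1. -/
/-- Closed form for the partial sum of squares `∑_{i=1}^m (n - i + 1)^2` (over the reals). -/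
lemma aux_sum_sq (n : ℕ) : ∀ m : ℕ,
    ∑ i ∈ Finset.Icc 1 m, ((n : ℝ) - (i : ℝ) + 1) ^ 2 =
      ((n : ℝ) * ((n : ℝ) + 1) * (2 * (n : ℝ) + 1)
        - ((n : ℝ) - m) * ((n : ℝ) - m + 1) * (2 * ((n : ℝ) - m) + 1)) / 6 := by
  intro m
  induction m with
  | zero => simp
  | succ k ih =>
      rw [Finset.sum_Icc_succ_top (by omega : 1 ≤ k + 1), ih]
      push_cast
      ring

/-- Lemma 3 of the paper: Let `q ≥ 1` and `n ≥ 2q + 1` be integers and set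
`τ = (q − 1)/q`. If `d₁, …, dₙ` are real numbers with `0 ≤ dᵢ ≤ n − i + 1` for all
`1 ≤ i ≤ n`, and moreover `dᵢ ≤ (n − i + 1)τ` for all `1 ≤ i ≤ n − q − 1`, then
`Σ_{i=1}^{n} ((n − i + 1) − dᵢ)² > n(n+1)(n+2)/(6q²) − q/6 − 1`. -/
theorem sum_sq_sub_deg_gt (q n : ℕ) (hq : 1 ≤ q) (hn : 2 * q + 1 ≤ n) (d : ℕ → ℝ)
    (hd0 : ∀ i, 1 ≤ i → i ≤ n → 0 ≤ d i ∧ d i ≤ (n : ℝ) - (i : ℝ) + 1)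
    (hd1 : ∀ i, 1 ≤ i → i ≤ n - q - 1 →
      d i ≤ ((n : ℝ) - (i : ℝ) + 1) * (((q : ℝ) - 1) / (q : ℝ))) :
    (∑ i ∈ Finset.Icc 1 n, (((n : ℝ) - (i : ℝ) + 1) - d i) ^ 2)
      > (n : ℝ) * ((n : ℝ) + 1) * ((n : ℝ) + 2) / (6 * (q : ℝ) ^ 2) - (q : ℝ) / 6 - 1 := by
  set m : ℕ := n - q - 1 with hm
  have hqR : (1 : ℝ) ≤ (q : ℝ) := by exact_mod_cast hq
  have hqpos : (0 : ℝ) < (q : ℝ) := by linarith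
  have hnR : 2 * (q : ℝ) + 1 ≤ (n : ℝ) := by exact_mod_cast hn
  have hmn : m ≤ n := by omega
  have hmR : (m : ℝ) = (n : ℝ) - (q : ℝ) - 1 := by
    have h : m + (q + 1) = n := by omega
    have := congrArg (Nat.cast : ℕ → ℝ) h
    push_cast at this
    linarith
  -- Step 1: each term with i ≤ m is at least ((n-i+1)/q)^2
  have step1 : ∑ i ∈ Finset.Icc 1 m, (((n : ℝ) - (i : ℝ) + 1) / (q : ℝ)) ^ 2
      ≤ ∑ i ∈ Finset.Icc 1 n, (((n : ℝ) - (i : ℝ) + 1) - d i) ^ 2 := by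
    calc ∑ i ∈ Finset.Icc 1 m, (((n : ℝ) - (i : ℝ) + 1) / (q : ℝ)) ^ 2
        ≤ ∑ i ∈ Finset.Icc 1 m, (((n : ℝ) - (i : ℝ) + 1) - d i) ^ 2 := by
          apply Finset.sum_le_sum
          intro i hi
          rw [Finset.mem_Icc] at hi
          have hiR : (i : ℝ) ≤ (n : ℝ) := by exact_mod_cast le_trans hi.2 hmn
          have hnum : (0 : ℝ) ≤ (n : ℝ) - (i : ℝ) + 1 := by linarith
          have h0 : (0 : ℝ) ≤ ((n : ℝ) - (i : ℝ) + 1) / (q : ℝ) := by positivity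
          have hle : ((n : ℝ) - (i : ℝ) + 1) / (q : ℝ) ≤ ((n : ℝ) - (i : ℝ) + 1) - d i := by
            have hdi := hd1 i hi.1 hi.2
            have : ((n : ℝ) - (i : ℝ) + 1) * (((q : ℝ) - 1) / (q : ℝ))
                = ((n : ℝ) - (i : ℝ) + 1) - ((n : ℝ) - (i : ℝ) + 1) / (q : ℝ) := by
              field_simp
            rw [this] at hdi
            linarith
          exact pow_le_pow_left₀ h0 hle 2
      _ ≤ ∑ i ∈ Finset.Icc 1 n, (((n : ℝ) - (i : ℝ) + 1) - d i) ^ 2 := by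
          apply Finset.sum_le_sum_of_subset_of_nonneg
          · exact Finset.Icc_subset_Icc_right hmn
          · intro i _ _; positivity
  -- Step 2: evaluate the lower-bound sum
  have step2 : ∑ i ∈ Finset.Icc 1 m, (((n : ℝ) - (i : ℝ) + 1) / (q : ℝ)) ^ 2
      = (((n : ℝ) * ((n : ℝ) + 1) * (2 * (n : ℝ) + 1)
          - ((q : ℝ) + 1) * ((q : ℝ) + 2) * (2 * (q : ℝ) + 3)) / 6) / (q : ℝ) ^ 2 := by
    have : ∀ i : ℕ, (((n : ℝ) - (i : ℝ) + 1) / (q : ℝ)) ^ 2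
        = ((n : ℝ) - (i : ℝ) + 1) ^ 2 / (q : ℝ) ^ 2 := by
      intro i; rw [div_pow]
    simp_rw [this]
    rw [← Finset.sum_div, aux_sum_sq n m, hmR]
    ring_nf
  rw [gt_iff_lt]
  have hQ2 : (0 : ℝ) < 6 * (q : ℝ) ^ 2 := by positivity
  have key : (n : ℝ) * ((n : ℝ) + 1) * ((n : ℝ) + 2) / (6 * (q : ℝ) ^ 2) - (q : ℝ) / 6 - 1
      < (((n : ℝ) * ((n : ℝ) + 1) * (2 * (n : ℝ) + 1)
          - ((q : ℝ) + 1) * ((q : ℝ) + 2) * (2 * (q : ℝ) + 3)) / 6) / (q : ℝ) ^ 2 := by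
    have hL : (n : ℝ) * ((n : ℝ) + 1) * ((n : ℝ) + 2) / (6 * (q : ℝ) ^ 2) - (q : ℝ) / 6 - 1
        = ((n : ℝ) * ((n : ℝ) + 1) * ((n : ℝ) + 2) - (q : ℝ) ^ 3 - 6 * (q : ℝ) ^ 2)
          / (6 * (q : ℝ) ^ 2) := by
      field_simp
    have hR : (((n : ℝ) * ((n : ℝ) + 1) * (2 * (n : ℝ) + 1)
          - ((q : ℝ) + 1) * ((q : ℝ) + 2) * (2 * (q : ℝ) + 3)) / 6) / (q : ℝ) ^ 2
        = ((n : ℝ) * ((n : ℝ) + 1) * (2 * (n : ℝ) + 1)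
          - ((q : ℝ) + 1) * ((q : ℝ) + 2) * (2 * (q : ℝ) + 3)) / (6 * (q : ℝ) ^ 2) := by
      rw [div_div]
    rw [hL, hR, div_lt_div_iff_of_pos_right hQ2]
    have h1 : (0 : ℝ) ≤ (n : ℝ) - 2 * (q : ℝ) - 1 := by linarith
    nlinarith [mul_nonneg (mul_nonneg h1 h1) h1, mul_nonneg h1 h1,
      mul_nonneg (mul_nonneg h1 h1) (le_of_lt hqpos),
      mul_nonneg h1 (le_of_lt hqpos), sq_nonneg ((q:ℝ) - 1),
      mul_nonneg (sq_nonneg ((q:ℝ) - 1)) (le_of_lt hqpos)]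
  calc (n : ℝ) * ((n : ℝ) + 1) * ((n : ℝ) + 2) / (6 * (q : ℝ) ^ 2) - (q : ℝ) / 6 - 1
      < _ := key
    _ = ∑ i ∈ Finset.Icc 1 m, (((n : ℝ) - (i : ℝ) + 1) / (q : ℝ)) ^ 2 := step2.symm
    _ ≤ _ := step1
end

section
/- Let L be a finite sequence over {0, 1} (a list of Booleans), let x₀ be the number of 0s in L and x₁ the number of 1s in L. Then the number of maximal runs of L, i.e., the number of maximal blocks of consecutive equal entries (equivalently, the number of groups produced by grouping consecutive equal elements), is at most 2 · min(x₀, x₁) + 1. -/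
/-- Auxiliary lemma: if `G` is a list of lists of Booleans such that the last element of
each list differs from the head of the next, then the number of lists is at most
`2 * min(count false, count true) + 1` of the flattened list. -/
theorem aux_runs_bound : ∀ (G : List (List Bool)),
    G.Chain' (fun a b => ∃ ha hb, (a.getLast ha == b.head hb) = false) →
    G.length ≤ 2 * min (G.flatten.count false) (G.flatten.count true) + 1
  | [], _ => by simp
  | [g], _ => by simp
  | g1 :: g2 :: t, h => by
      obtain ⟨r, h'⟩ := List.isChain_cons_cons.mp h
      have IH := aux_runs_bound t h'.tail
      obtain ⟨ha, hb, hr⟩ := r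
      have hxy : g1.getLast ha ≠ g2.head hb := by simpa using hr
      have hx : g1.getLast ha ∈ g1 := List.getLast_mem ha
      have hy : g2.head hb ∈ g2 := List.head_mem hb
      have key : (false ∈ g1 ∧ true ∈ g2) ∨ (true ∈ g1 ∧ false ∈ g2) := by
        cases hx' : g1.getLast ha <;> cases hy' : g2.head hb <;>
            rw [hx'] at hxy hx <;> rw [hy'] at hxy hy
        · exact absurd rfl hxy
        · exact Or.inl ⟨hx, hy⟩
        · exact Or.inr ⟨hx, hy⟩
        · exact absurd rfl hxy
      have h1 : 1 ≤ g1.count false + g2.count false := by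
        rcases key with ⟨k1, _⟩ | ⟨_, k2⟩
        · have := List.count_pos_iff.mpr k1; omega
        · have := List.count_pos_iff.mpr k2; omega
      have h2 : 1 ≤ g1.count true + g2.count true := by
        rcases key with ⟨_, k2⟩ | ⟨k1, _⟩
        · have := List.count_pos_iff.mpr k2; omega
        · have := List.count_pos_iff.mpr k1; omega
      simp only [List.flatten_cons, List.count_append, List.length_cons] at *
      omega

/-- Lemma 6 of the paper: For a finite 0-1 sequence `L` (a list of
Booleans) with `x₀` zeros and `x₁` ones, the number of maximal runs of `L` (the number
of groups produced by grouping consecutive equal elements) is at most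
`2 · min(x₀, x₁) + 1`. -/
theorem runs_le_two_min_add_one (L : List Bool) :
    (L.splitBy (· == ·)).length ≤ 2 * min (L.count false) (L.count true) + 1 := by
  have := aux_runs_bound (L.splitBy (· == ·)) (List.isChain_getLast_head_splitBy _ L)
  rwa [List.flatten_splitBy] at this
end
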